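/- arXiv:0902.3440 — 8 statements merged into one kernel-verified Lean document; each statement's English description precedes it below -/
import Mathlib

section
/- Let i, j be positive integers with gcd(i, j) = 1. The set of points (a, b) ∈ ℝ² satisfying T_i(b) − T_j(a) = 0, T_j′(a) = 0, and T_i′(b) = 0 is exactly the set S = { (cos(λπ/j), cos(μπ/i)) : 1 ≤ λ ≤ j−1, 1 ≤ μ ≤ i−1, λ ≡ μ (mod 2) }, and S has exactly (i−1)(j−1)/2 elements. -/
/-!
Since `T_n (cos θ) = cos (n θ)` and `T_n' = n U_{n-1}`, the critical points of `T_n` are the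
`n - 1` roots `cos (k π / n)`, `0 < k < n`, of `U_{n-1}`, and `T_n` takes the value `(-1)^k` there.
A pair of critical points `(cos (λ π / j), cos (μ π / i))` therefore lies on the curve exactly
when `λ ≡ μ (mod 2)`. Cosine is injective on `[0, π]`, so distinct index pairs give distinct
points, and as `gcd (i, j) = 1` one of `i - 1`, `j - 1` is even, so exactly half of the
`(i - 1)(j - 1)` index pairs have equal parity.
-/

open Polynomial Polynomial.Chebyshev Real Finset

namespace Polynomial.Chebyshev

theorem eval_derivative_T_real_eq_zero_iff {n : ℕ} (hn : n ≠ 0) (x : ℝ) :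
    (derivative (T ℝ n)).eval x = 0 ↔ ∃ k : ℕ, 0 < k ∧ k < n ∧ x = cos (k * π / n) := by
  obtain ⟨m, rfl⟩ := Nat.exists_eq_add_one_of_ne_zero hn
  have hU : U ℝ m ≠ 0 := fun h => by simpa [h] using degree_U_natCast (R := ℝ) m
  rw [T_derivative_eq_U, eval_mul, eval_intCast, mul_eq_zero_iff_left (by exact_mod_cast hn),
    Nat.cast_add_one, add_sub_cancel_right, ← IsRoot.def, ← mem_roots hU, roots_U_real,
    Finset.mem_val, Finset.mem_image]
  constructor
  · rintro ⟨k, hk, rfl⟩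
    exact ⟨k + 1, k.succ_pos, by simpa using hk, by push_cast; rfl⟩
  · rintro ⟨_ | k, hk₀, hk, rfl⟩
    · exact absurd hk₀ (lt_irrefl 0)
    · exact ⟨k, by simpa using hk, by push_cast; rfl⟩

theorem eval_T_real_cos_mul_pi_div_eq_iff {m n k l : ℕ} (hm : m ≠ 0) (hn : n ≠ 0) :
    (T ℝ m).eval (cos (k * π / m)) = (T ℝ n).eval (cos (l * π / n)) ↔ k % 2 = l % 2 := by
  rw [eval_T_real_cos_int_mul_pi_div hm, eval_T_real_cos_int_mul_pi_div hn, Int.cast_inj,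
    Units.val_inj, Int.negOnePow_eq_iff, Int.even_iff]
  omega

end Polynomial.Chebyshev

theorem Real.injOn_cos_nat_mul_pi_div {n : ℕ} (hn : n ≠ 0) :
    Set.InjOn (fun k : ℕ => cos (k * π / n)) (Set.Iic n) := by
  refine injOn_cos.comp (fun k l _ _ h => ?_) (fun k hk => ⟨by positivity, ?_⟩)
  · have := pi_pos
    field_simp at h
    exact_mod_cast h
  · rw [div_le_iff₀ (by positivity), mul_comm]
    gcongr
    exact_mod_cast hk

theorem Nat.card_filter_Ioc_not_dvd_two (n : ℕ) : #{x ∈ Ioc 0 n | ¬ 2 ∣ x} = (n + 1) / 2 := by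
  have := card_filter_add_card_filter_not (s := Ioc 0 n) (2 ∣ ·)
  rw [Nat.Ioc_filter_dvd_card_eq_div, Nat.card_Ioc] at this
  omega

namespace ChebyshevCurve

def sameParityPairs (a b : ℕ) : Finset (ℕ × ℕ) :=
  {q ∈ Ioc 0 a ×ˢ Ioc 0 b | q.1 % 2 = q.2 % 2}

theorem mem_sameParityPairs {a b : ℕ} {q : ℕ × ℕ} :
    q ∈ sameParityPairs a b ↔ (0 < q.1 ∧ q.1 ≤ a) ∧ (0 < q.2 ∧ q.2 ≤ b) ∧ q.1 % 2 = q.2 % 2 := by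
  simp only [sameParityPairs, mem_filter, mem_product, mem_Ioc, and_assoc]

theorem card_sameParityPairs {a b : ℕ} (h : Even a ∨ Even b) :
    #(sameParityPairs a b) = a * b / 2 := by
  have hpar : ∀ q : ℕ × ℕ, q.1 % 2 = q.2 % 2 ↔ (2 ∣ q.1) = (2 ∣ q.2) := fun q => by
    rw [eq_iff_iff]; omega
  rw [sameParityPairs, filter_congr fun q _ => hpar q, filter_product_card,
    Nat.Ioc_filter_dvd_card_eq_div, Nat.Ioc_filter_dvd_card_eq_div,
    Nat.card_filter_Ioc_not_dvd_two, Nat.card_filter_Ioc_not_dvd_two]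
  rcases h with ⟨c, rfl⟩ | ⟨c, rfl⟩
  · rw [show (c + c) / 2 = c by omega, show (c + c + 1) / 2 = c by omega, ← mul_add,
      show b / 2 + (b + 1) / 2 = b by omega, ← two_mul, mul_assoc,
      Nat.mul_div_cancel_left _ two_pos]
  · rw [show (c + c) / 2 = c by omega, show (c + c + 1) / 2 = c by omega, ← add_mul,
      show a / 2 + (a + 1) / 2 = a by omega, ← two_mul, mul_left_comm,
      Nat.mul_div_cancel_left _ two_pos]

noncomputable def nodePair (i j : ℕ) (q : ℕ × ℕ) : ℝ × ℝ :=
  (cos (q.1 * π / j), cos (q.2 * π / i))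

theorem injOn_nodePair {i j : ℕ} (hi : i ≠ 0) (hj : j ≠ 0) :
    Set.InjOn (nodePair i j) (Set.Iic j ×ˢ Set.Iic i) := fun _ hq _ hr hqr =>
  Prod.ext (injOn_cos_nat_mul_pi_div hj hq.1 hr.1 congr(($hqr).1))
    (injOn_cos_nat_mul_pi_div hi hq.2 hr.2 congr(($hqr).2))

theorem singular_points_eq_image {i j : ℕ} (hi : i ≠ 0) (hj : j ≠ 0) :
    {p : ℝ × ℝ | (T ℝ i).eval p.2 - (T ℝ j).eval p.1 = 0 ∧
        (derivative (T ℝ j)).eval p.1 = 0 ∧ (derivative (T ℝ i)).eval p.2 = 0} =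
      nodePair i j '' sameParityPairs (j - 1) (i - 1) := by
  ext ⟨a, b⟩
  simp only [Set.mem_ofPred_eq, eval_derivative_T_real_eq_zero_iff hi,
    eval_derivative_T_real_eq_zero_iff hj, Set.mem_image, mem_coe, mem_sameParityPairs]
  constructor
  · rintro ⟨heq, ⟨lam, hlam₀, hlam, rfl⟩, ⟨mu, hmu₀, hmu, rfl⟩⟩
    rw [sub_eq_zero, eval_T_real_cos_mul_pi_div_eq_iff hi hj] at heq
    exact ⟨(lam, mu), by omega, rfl⟩
  · rintro ⟨⟨lam, mu⟩, hq, hpq⟩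
    obtain ⟨rfl, rfl⟩ := Prod.ext_iff.1 hpq
    exact ⟨sub_eq_zero.2 ((eval_T_real_cos_mul_pi_div_eq_iff hi hj).2 (by omega)),
      ⟨lam, by omega, by omega, rfl⟩, ⟨mu, by omega, by omega, rfl⟩⟩

end ChebyshevCurve

open ChebyshevCurve

theorem chebyshev_curve_singular_points (i j : ℕ) (hi : 0 < i) (hj : 0 < j)
    (hgcd : Nat.gcd i j = 1)
    (S : Set (ℝ × ℝ))
    (hS : S = {p : ℝ × ℝ | ∃ lam mu : ℕ, 1 ≤ lam ∧ lam ≤ j - 1 ∧ 1 ≤ mu ∧ mu ≤ i - 1 ∧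
        lam % 2 = mu % 2 ∧ p = (Real.cos ((lam : ℝ) * π / j), Real.cos ((mu : ℝ) * π / i))}) :
    {p : ℝ × ℝ | (T ℝ i).eval p.2 - (T ℝ j).eval p.1 = 0 ∧
        (Polynomial.derivative (T ℝ j)).eval p.1 = 0 ∧
        (Polynomial.derivative (T ℝ i)).eval p.2 = 0} = S ∧
    S.ncard = (i - 1) * (j - 1) / 2 := by
  have hS_image : S = nodePair i j '' sameParityPairs (j - 1) (i - 1) := by
    ext p
    simp only [hS, Set.mem_ofPred_eq, Set.mem_image, Prod.exists, mem_coe, mem_sameParityPairs,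
      eq_comm (a := p)]
    exact exists₂_congr fun lam mu => by simp only [and_assoc]; exact Iff.rfl
  have hpar : Even (j - 1) ∨ Even (i - 1) := by
    have : ¬ (2 ∣ i ∧ 2 ∣ j) := fun h => by simpa [hgcd] using Nat.dvd_gcd h.1 h.2
    simp only [Nat.even_iff]
    omega
  have hinj : Set.InjOn (nodePair i j) (sameParityPairs (j - 1) (i - 1)) :=
    (injOn_nodePair hi.ne' hj.ne').mono fun q hq => by
      rw [mem_coe, mem_sameParityPairs] at hq
      exact ⟨Set.mem_Iic.2 (by omega), Set.mem_Iic.2 (by omega)⟩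
  refine ⟨hS_image ▸ singular_points_eq_image hi.ne' hj.ne', ?_⟩
  rw [hS_image, hinj.ncard_image, Set.ncard_coe_finset, card_sameParityPairs hpar, mul_comm]
end

section
/- Let i, j be positive integers with gcd(i, j) = 1, let λ, μ be integers with 1 ≤ λ ≤ j−1, 1 ≤ μ ≤ i−1 and λ ≡ μ (mod 2), and let u, v be integers with i·u + j·v = 1. Set k₁ = λiu + μjv and k₂ = λiu − μjv, and set t₁ = cos(k₁π/(ij)), t₂ = cos(k₂π/(ij)). Then t₁ ≠ t₂, and for m = 1, 2 one has T_i(t_m) = cos(λπ/j) and T_j(t_m) = cos(μπ/i); that is, the parametrization α = (T_i, T_j) sends the two distinct parameters t₁, t₂ to the same node of the curve T_i(y) − T_j(x) = 0. -/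
/-!
Since `T_n (cos θ) = cos (n θ)`, we have `T_i (cos (k π / (i j))) = cos (k π / j)`, and the value
only depends on `k` modulo `2 j`. From `i u + j v = 1`, `k₁ = λ i u + μ j v` differs from `λ` by
`j v (μ - λ)` and from `μ` by `i u (λ - μ)`; the parity hypothesis makes these multiples of `2 j`
and `2 i`. Likewise `k₂ ≡ λ (mod 2 j)` and `k₂ ≡ -μ (mod 2 i)`. Finally `t₁ = t₂` would give
`k₁ ≡ ±k₂ (mod 2 i j)`, i.e. `i ∣ 2 μ j v` or `j ∣ 2 λ i u`, hence `i ∣ μ` or `j ∣ λ`.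
-/

open Polynomial Polynomial.Chebyshev Real

theorem cos_int_mul_pi_div_eq_cos_iff {n : ℕ} (hn : n ≠ 0) {k l : ℤ} :
    cos (k * π / n) = cos (l * π / n) ↔ k ≡ l [ZMOD 2 * n] ∨ k ≡ -l [ZMOD 2 * n] := by
  have hn' : (n : ℝ) ≠ 0 := by exact_mod_cast hn
  have two_mul_pi : ∀ m : ℤ, 2 * (m : ℝ) * π = ((2 * n * m : ℤ) : ℝ) * π / n := by
    intro m
    push_cast
    field_simp
  have scale_inj : ∀ a b : ℤ, (a : ℝ) * π / n = (b : ℝ) * π / n ↔ a = b := by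
    intro a b
    rw [div_left_inj' hn', mul_left_inj' pi_ne_zero, Int.cast_inj]
  simp only [cos_eq_cos_iff, two_mul_pi, ← add_div, ← sub_div, ← add_mul, ← sub_mul]
  simp only [← Int.cast_add, ← Int.cast_sub, scale_inj, Int.modEq_iff_dvd]
  constructor
  · rintro ⟨m, h | h⟩
    · exact Or.inl ⟨m, by rw [h]; ring⟩
    · exact Or.inr ⟨-m, by rw [h]; ring⟩
  · rintro (⟨m, h⟩ | ⟨m, h⟩)
    · exact ⟨m, Or.inl (by linear_combination h)⟩
    · exact ⟨-m, Or.inr (by linear_combination -h)⟩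

theorem T_real_eval_cos_div_mul {n : ℕ} (hn : n ≠ 0) (x m : ℝ) :
    (T ℝ n).eval (cos (x / (n * m))) = cos (x / m) := by
  rw [T_real_cos, Int.cast_natCast, ← mul_div_assoc,
    mul_div_mul_left _ _ (by exact_mod_cast hn : (n : ℝ) ≠ 0)]

theorem Int.mul_add_mul_modEq_of_bezout {x y u v a b : ℤ} (huv : x * u + y * v = 1)
    (hab : a ≡ b [ZMOD 2]) : a * x * u + b * y * v ≡ b [ZMOD 2 * x] := by
  obtain ⟨c, hc⟩ := hab.dvd
  exact Int.modEq_iff_dvd.mpr ⟨u * c, by linear_combination -b * huv + x * u * hc⟩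

theorem Int.not_modEq_add_sub_of_bezout {x y u v b : ℤ} (huv : x * u + y * v = 1) (hb : 0 < b)
    (hbx : b < x) (a : ℤ) : ¬a + b * y * v ≡ a - b * y * v [ZMOD 2 * (x * y)] := by
  intro h
  obtain ⟨c, hc⟩ := h.dvd
  have hcop : IsCoprime x (y * v) := ⟨u, 1, by linear_combination huv⟩
  have hxb : x ∣ b := hcop.dvd_of_dvd_mul_right ⟨-(y * c), by linarith⟩
  linarith [Int.le_of_dvd hb hxb]

theorem chebyshev_curve_node_preimages_general (i j : ℕ)
    (lam mu : ℤ) (hlam1 : 1 ≤ lam) (hlam2 : lam ≤ (j : ℤ) - 1)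
    (hmu1 : 1 ≤ mu) (hmu2 : mu ≤ (i : ℤ) - 1) (hparity : lam % 2 = mu % 2)
    (u v : ℤ) (huv : (i : ℤ) * u + (j : ℤ) * v = 1)
    (k₁ k₂ : ℤ) (hk₁ : k₁ = lam * i * u + mu * j * v) (hk₂ : k₂ = lam * i * u - mu * j * v)
    (t₁ t₂ : ℝ) (ht₁ : t₁ = Real.cos ((k₁ : ℝ) * π / (i * j)))
    (ht₂ : t₂ = Real.cos ((k₂ : ℝ) * π / (i * j))) :
    t₁ ≠ t₂ ∧
    (T ℝ i).eval t₁ = Real.cos ((lam : ℝ) * π / j) ∧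
    (T ℝ j).eval t₁ = Real.cos ((mu : ℝ) * π / i) ∧
    (T ℝ i).eval t₂ = Real.cos ((lam : ℝ) * π / j) ∧
    (T ℝ j).eval t₂ = Real.cos ((mu : ℝ) * π / i) := by
  have hi : i ≠ 0 := by omega
  have hj : j ≠ 0 := by omega
  have hvu : (j : ℤ) * v + i * u = 1 := by linear_combination huv
  have hparity' : lam ≡ -mu [ZMOD 2] := by unfold Int.ModEq; omega
  subst hk₁ hk₂ ht₁ ht₂
  have k₁_modEq_i := Int.mul_add_mul_modEq_of_bezout huv hparity
  have k₁_modEq_j : lam * i * u + mu * j * v ≡ lam [ZMOD 2 * j] := by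
    rw [add_comm]; exact Int.mul_add_mul_modEq_of_bezout hvu (Int.ModEq.symm hparity)
  have k₂_modEq_i : lam * i * u - mu * j * v ≡ -mu [ZMOD 2 * i] := by
    rw [sub_eq_add_neg, ← neg_mul, ← neg_mul]; exact Int.mul_add_mul_modEq_of_bezout huv hparity'
  have k₂_modEq_j : lam * i * u - mu * j * v ≡ lam [ZMOD 2 * j] := by
    rw [sub_eq_neg_add, ← neg_mul, ← neg_mul]; exact Int.mul_add_mul_modEq_of_bezout hvu hparity'.symm
  refine ⟨?_, ?_, ?_, ?_, ?_⟩
  · rw [← Nat.cast_mul, Ne, cos_int_mul_pi_div_eq_cos_iff (by positivity)]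
    push_cast
    rintro (h | h)
    · exact Int.not_modEq_add_sub_of_bezout huv (by omega) (by omega) _ h
    · exact Int.not_modEq_add_sub_of_bezout (b := lam) hvu (by omega) (by omega) (mu * j * v)
        (by convert h using 1 <;> ring)
  · rw [T_real_eval_cos_div_mul hi, cos_int_mul_pi_div_eq_cos_iff hj]
    exact .inl k₁_modEq_j
  · rw [mul_comm (i : ℝ), T_real_eval_cos_div_mul hj, cos_int_mul_pi_div_eq_cos_iff hi]
    exact .inl k₁_modEq_i
  · rw [T_real_eval_cos_div_mul hi, cos_int_mul_pi_div_eq_cos_iff hj]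
    exact .inl k₂_modEq_j
  · rw [mul_comm (i : ℝ), T_real_eval_cos_div_mul hj, cos_int_mul_pi_div_eq_cos_iff hi]
    exact .inr k₂_modEq_i

theorem chebyshev_curve_node_preimages (i j : ℕ) (hi : 0 < i) (hj : 0 < j)
    (hgcd : Nat.gcd i j = 1)
    (lam mu : ℤ) (hlam1 : 1 ≤ lam) (hlam2 : lam ≤ (j : ℤ) - 1)
    (hmu1 : 1 ≤ mu) (hmu2 : mu ≤ (i : ℤ) - 1) (hparity : lam % 2 = mu % 2)
    (u v : ℤ) (huv : (i : ℤ) * u + (j : ℤ) * v = 1)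
    (k₁ k₂ : ℤ) (hk₁ : k₁ = lam * i * u + mu * j * v) (hk₂ : k₂ = lam * i * u - mu * j * v)
    (t₁ t₂ : ℝ) (ht₁ : t₁ = Real.cos ((k₁ : ℝ) * π / (i * j)))
    (ht₂ : t₂ = Real.cos ((k₂ : ℝ) * π / (i * j))) :
    t₁ ≠ t₂ ∧
    (T ℝ i).eval t₁ = Real.cos ((lam : ℝ) * π / j) ∧
    (T ℝ j).eval t₁ = Real.cos ((mu : ℝ) * π / i) ∧
    (T ℝ i).eval t₂ = Real.cos ((lam : ℝ) * π / j) ∧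
    (T ℝ j).eval t₂ = Real.cos ((mu : ℝ) * π / i) :=
  chebyshev_curve_node_preimages_general i j lam mu hlam1 hlam2 hmu1 hmu2 hparity u v huv k₁ k₂ hk₁
    hk₂ t₁ t₂ ht₁ ht₂
end

section
/- Let i, j be positive integers with gcd(i, j) = 1, and let S = { (cos(λπ/j), cos(μπ/i)) : 1 ≤ λ ≤ j−1, 1 ≤ μ ≤ i−1, λ ≡ μ (mod 2) } ⊂ ℝ². Then { t ∈ ℝ : (T_i(t), T_j(t)) ∈ S } = { cos(kπ/(ij)) : 1 ≤ k < ij, i ∤ k, j ∤ k }. -/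
open Polynomial Polynomial.Chebyshev Real

lemma cheb_ge_one (x : ℝ) (hx : 1 ≤ x) :
    ∀ n : ℕ, 1 ≤ (T ℝ n).eval x ∧ (T ℝ n).eval x ≤ (T ℝ (n+1)).eval x := by
  intro n
  induction n with
  | zero => simp [T_zero, T_one, hx]
  | succ n ih =>
    obtain ⟨h1, h2⟩ := ih
    have key : (T ℝ ((n:ℤ) + 2)).eval x = 2 * x * (T ℝ ((n:ℤ)+1)).eval x - (T ℝ (n:ℤ)).eval x := by
      rw [T_add_two]; simp
    push_cast
    constructor
    · linarith
    · rw [show ((n:ℤ) + 1 + 1) = (n:ℤ) + 2 by ring, key]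
      nlinarith

lemma cheb_neg (x : ℝ) : ∀ n : ℕ,
    (T ℝ n).eval (-x) = (-1)^n * (T ℝ n).eval x ∧
    (T ℝ (n+1)).eval (-x) = (-1)^(n+1) * (T ℝ (n+1)).eval x := by
  intro n
  induction n with
  | zero => simp [T_zero, T_one]
  | succ n ih =>
    obtain ⟨h1, h2⟩ := ih
    push_cast at *
    refine ⟨h2, ?_⟩
    have key : ∀ y : ℝ, (T ℝ ((n:ℤ) + 2)).eval y
        = 2 * y * (T ℝ ((n:ℤ)+1)).eval y - (T ℝ (n:ℤ)).eval y := by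
      intro y; rw [T_add_two]; simp
    rw [show ((n:ℤ) + 1 + 1) = (n:ℤ) + 2 by ring, key, key, h1, h2]
    ring

lemma cheb_bound (t : ℝ) (n : ℕ) (h : |(T ℝ n).eval t| < 1) : |t| < 1 := by
  by_contra h'
  push_neg at h'
  rcases le_or_gt 1 t with ht | ht
  · have := (cheb_ge_one t ht n).1
    have := le_abs_self ((T ℝ (n:ℤ)).eval t)
    linarith
  · have ht' : t ≤ -1 := by
      rcases abs_cases t with ⟨he, _⟩ | ⟨he, _⟩ <;> linarith
    have hnt : 1 ≤ -t := by linarith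
    have h1 := (cheb_neg (-t) n).1
    rw [neg_neg] at h1
    have h2 := (cheb_ge_one (-t) hnt n).1
    have : |(T ℝ (n:ℤ)).eval t| = |(T ℝ (n:ℤ)).eval (-t)| := by
      rw [h1, abs_mul, abs_pow, abs_neg, abs_one, one_pow, one_mul]
    rw [this] at h
    have := le_abs_self ((T ℝ (n:ℤ)).eval (-t))
    linarith

lemma reduce_node (j k : ℕ) (hj : 0 < j) (hk : ¬ j ∣ k) :
    ∃ lam : ℕ, 1 ≤ lam ∧ lam ≤ j - 1 ∧ lam % 2 = k % 2 ∧
      Real.cos ((lam:ℝ) * π / j) = Real.cos ((k:ℝ) * π / j) := by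
  have hj0 : (j:ℝ) ≠ 0 := by positivity
  set q := k / (2*j) with hqdef
  set r := k % (2*j) with hrdef
  have hq : 2*j*q + r = k := Nat.div_add_mod k (2*j)
  have hq2 : 2*(j*q) + r = k := by rw [← hq]; ring
  have hr0 : r ≠ 0 := by
    intro h; exact hk (dvd_trans ⟨2, by ring⟩ (Nat.dvd_of_mod_eq_zero h))
  have hrj : r ≠ j := by
    intro h; exact hk ⟨2*q + 1, by rw [← hq, h]; ring⟩
  have hr2j : r < 2*j := Nat.mod_lt _ (by omega)
  have hcos : Real.cos ((r:ℝ) * π / j) = Real.cos ((k:ℝ) * π / j) := by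
    have : (k:ℝ) * π / j = (r:ℝ) * π / j + (q:ℕ) * (2*π) := by
      have hk' : (k:ℝ) = 2*j*q + r := by exact_mod_cast congrArg (Nat.cast : ℕ → ℝ) hq.symm
      rw [hk']; field_simp; ring
    rw [this, Real.cos_add_nat_mul_two_pi]
  rcases le_or_gt r j with h | h
  · exact ⟨r, by omega, by omega, by omega, hcos⟩
  · refine ⟨2*j - r, by omega, by omega, by omega, ?_⟩
    have hcast : ((2*j - r : ℕ) : ℝ) = 2*(j:ℝ) - r := by
      push_cast [Nat.cast_sub hr2j.le]; ring
    have harg : ((2*j - r : ℕ) : ℝ) * π / j = 2*π - (r:ℝ)*π/j := by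
      rw [hcast]; field_simp
    rw [harg, Real.cos_two_pi_sub, hcos]

theorem chebyshev_curve_node_parameter_set (i j : ℕ) (hi : 0 < i) (hj : 0 < j)
    (hgcd : Nat.gcd i j = 1)
    (S : Set (ℝ × ℝ))
    (hS : S = {p : ℝ × ℝ | ∃ lam mu : ℕ, 1 ≤ lam ∧ lam ≤ j - 1 ∧ 1 ≤ mu ∧ mu ≤ i - 1 ∧
        lam % 2 = mu % 2 ∧ p = (Real.cos ((lam : ℝ) * π / j), Real.cos ((mu : ℝ) * π / i))}) :
    {t : ℝ | ((T ℝ i).eval t, (T ℝ j).eval t) ∈ S} =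
      {t : ℝ | ∃ k : ℕ, 1 ≤ k ∧ k < i * j ∧ ¬ (i ∣ k) ∧ ¬ (j ∣ k) ∧
        t = Real.cos ((k : ℝ) * π / (i * j))} := by
  have hi0 : (i:ℝ) ≠ 0 := by positivity
  have hj0 : (j:ℝ) ≠ 0 := by positivity
  have hpi := Real.pi_pos
  ext t
  simp only [hS, Set.mem_setOf_eq, Prod.mk.injEq]
  constructor
  · rintro ⟨lam, mu, hl1, hl2, hm1, hm2, hpar, h1, h2⟩
    have hi2 : 2 ≤ i := by omega
    have hj2 : 2 ≤ j := by omega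
    -- bounds on cos(lam π / j)
    have habs : ∀ (a b : ℕ), 1 ≤ a → a ≤ b - 1 → 2 ≤ b → |Real.cos ((a:ℝ) * π / b)| < 1 := by
      intro a b ha hab hb
      have hb0 : (0:ℝ) < b := by positivity
      have hx0 : 0 < (a:ℝ) * π / b := by
        apply div_pos (by positivity) hb0
      have hxpi : (a:ℝ) * π / b < π := by
        rw [div_lt_iff₀ hb0]
        have : (a:ℝ) < b := by exact_mod_cast (by omega : a < b)
        nlinarith
      rw [abs_lt]
      constructor
      · have := Real.cos_lt_cos_of_nonneg_of_le_pi hx0.le le_rfl hxpi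
        rw [Real.cos_pi] at this; linarith
      · have := Real.cos_lt_cos_of_nonneg_of_le_pi le_rfl hxpi.le hx0
        rw [Real.cos_zero] at this; linarith
    have ht1 : |t| < 1 := by
      apply cheb_bound t i
      rw [h1]; exact habs lam j hl1 hl2 hj2
    have htl : -1 < t := by rcases abs_lt.mp ht1 with ⟨h, _⟩; linarith
    have htu : t < 1 := (abs_lt.mp ht1).2
    set θ := Real.arccos t with hθdef
    have hc : Real.cos θ = t := Real.cos_arccos htl.le htu.le
    have hθ1 : 0 < θ := Real.arccos_pos.mpr htu
    have hθ2 : θ < π := by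
      rcases lt_or_eq_of_le (Real.arccos_le_pi t) with h | h
      · exact h
      · exact absurd (Real.arccos_eq_pi.mp h) (by linarith)
    rw [← hc, T_real_cos] at h1 h2
    -- extract K from h1
    have key : ∀ (n a b : ℕ), 1 ≤ a → a ≤ b - 1 → 2 ≤ b →
        Real.cos ((n:ℤ) * θ) = Real.cos ((a:ℝ) * π / b) →
        ∃ K : ℤ, (n:ℝ) * (b:ℝ) * θ = (K:ℝ) * π ∧ ¬ ((b:ℤ) ∣ K) := by
      intro n a b ha hab hb heq
      have hb0 : (b:ℝ) ≠ 0 := by positivity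
      have hdvd : ∀ K : ℤ, (b:ℤ) ∣ K - (a:ℤ) ∨ (b:ℤ) ∣ K + (a:ℤ) → ¬ ((b:ℤ) ∣ K) := by
        intro K hK hbK
        have : (b:ℤ) ∣ (a:ℤ) := by
          rcases hK with h | h
          · have := dvd_sub hbK h; simpa using this
          · have := dvd_sub h hbK; simpa using this
        have : (b:ℕ) ∣ a := by exact_mod_cast this
        have := Nat.le_of_dvd (by omega) this
        omega
      obtain ⟨m, hm | hm⟩ := Real.cos_eq_cos_iff.mp heq
      · refine ⟨(a:ℤ) - 2*m*b, ?_, hdvd _ (Or.inl ⟨-2*m, by ring⟩)⟩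
        have : (n:ℝ) * θ = (a:ℝ)*π/b - 2*m*π := by push_cast at hm ⊢; linarith
        calc (n:ℝ) * (b:ℝ) * θ = (b:ℝ) * ((n:ℝ) * θ) := by ring
          _ = (b:ℝ) * ((a:ℝ)*π/b - 2*m*π) := by rw [this]
          _ = (((a:ℤ) - 2*m*b : ℤ):ℝ) * π := by push_cast; field_simp
      · refine ⟨2*m*b - (a:ℤ), ?_, hdvd _ (Or.inr ⟨2*m, by ring⟩)⟩
        have : (n:ℝ) * θ = 2*m*π - (a:ℝ)*π/b := by push_cast at hm ⊢; linarith
        calc (n:ℝ) * (b:ℝ) * θ = (b:ℝ) * ((n:ℝ) * θ) := by ring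
          _ = (b:ℝ) * (2*m*π - (a:ℝ)*π/b) := by rw [this]
          _ = ((2*m*b - (a:ℤ) : ℤ):ℝ) * π := by push_cast; field_simp
    obtain ⟨K, hK, hKj⟩ := key i lam j hl1 hl2 hj2 (by push_cast at h1 ⊢; exact h1)
    obtain ⟨K', hK', hKi⟩ := key j mu i hm1 hm2 hi2 (by push_cast at h2 ⊢; exact h2)
    have hKK : K = K' := by
      have : (K:ℝ) * π = (K':ℝ) * π := by
        rw [← hK, ← hK']; ring
      have : (K:ℝ) = (K':ℝ) := mul_right_cancel₀ (ne_of_gt hpi) this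
      exact_mod_cast this
    subst hKK
    have hKpos : 0 < K := by
      have h1 : (0:ℝ) < (K:ℝ) * π := by
        rw [← hK]; positivity
      have : (0:ℝ) < (K:ℝ) := by nlinarith
      exact_mod_cast this
    have hKub : K < (i:ℤ) * j := by
      have h1 : (K:ℝ) * π < ((i:ℝ) * j) * π := by
        rw [← hK]
        have : (0:ℝ) < (i:ℝ) * (j:ℝ) := by positivity
        nlinarith
      have : (K:ℝ) < (i:ℝ) * j := by nlinarith
      exact_mod_cast this
    refine ⟨K.toNat, ?_, ?_, ?_, ?_, ?_⟩
    · omega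
    · have : (K.toNat : ℤ) < (i:ℤ) * j := by omega
      exact_mod_cast this
    · intro hd
      exact hKi (by exact_mod_cast (Int.natCast_dvd_natCast.mpr hd).trans (dvd_of_eq (Int.toNat_of_nonneg hKpos.le)))
    · intro hd
      exact hKj (by exact_mod_cast (Int.natCast_dvd_natCast.mpr hd).trans (dvd_of_eq (Int.toNat_of_nonneg hKpos.le)))
    · have hθeq : θ = (K.toNat : ℝ) * π / ((i:ℝ) * j) := by
        have hKr : ((K.toNat : ℕ):ℝ) = (K:ℝ) := by
          exact_mod_cast congrArg (Int.cast : ℤ → ℝ) (Int.toNat_of_nonneg hKpos.le)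
        rw [hKr, eq_div_iff (by positivity : (i:ℝ) * (j:ℝ) ≠ 0)]
        rw [← hK]; ring
      rw [← hc, hθeq]
  · rintro ⟨k, hk1, hk2, hki, hkj, hteq⟩
    obtain ⟨lam, hl1, hl2, hlp, hlcos⟩ := reduce_node j k hj hkj
    obtain ⟨mu, hm1, hm2, hmp, hmcos⟩ := reduce_node i k hi hki
    refine ⟨lam, mu, hl1, hl2, hm1, hm2, by omega, ?_, ?_⟩
    · rw [hteq, T_real_cos, hlcos]
      congr 1
      push_cast
      field_simp
    · rw [hteq, T_real_cos, hmcos]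
      congr 1
      push_cast
      field_simp
end

section
/- Let K be a field of characteristic zero and let i, j, k be integers with i, j, k ≥ 2. Then the variable polynomial X (equivalently T_1) belongs to the K-subalgebra of K[X] generated by {T_i, T_j, T_k} (Algebra.adjoin K {T_i, T_j, T_k}) if and only if gcd(i, j) = gcd(i, k) = gcd(j, k) = 1. Equivalently, the morphism (T_i, T_j, T_k) : 𝔸¹ → 𝔸³ is a closed embedding if and only if the pairwise greatest common divisor of i, j, k equals 1. -/
/-!
Since `T (m * n) = (T m).comp (T n)`, a subalgebra of `K[X]` containing `T i` contains `T n`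
for every multiple `n` of `i`; since `2 T a T b = T (a + b) + T (a - b)`, it contains `T (a - b)`
once it contains `T a`, `T b` and `T (a + b)`. For pairwise coprime `i, j, k`, one of which,
say `k`, is odd, the Chinese remainder theorem gives `i ∣ a`, `j ∣ b`, `k ∣ a + b` with
`a - b = 1`, whence `X = T 1`.

Conversely, if `g = gcd i j ≥ 2` then everything lies in the algebra generated by `T g` and
`T k`. Over an algebraic closure, `T n ((u + u⁻¹) / 2) = (uⁿ + u⁻ⁿ) / 2`; taking `u = αβ` and
`v = αβ⁻¹` with `α`, `β` primitive roots of unity of orders `2g`, `2k`, we get `α^g = α^(-g)` and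
`β^k = β^(-k)`, so `T g` and `T k` take equal values at `(u + u⁻¹) / 2` and `(v + v⁻¹) / 2`,
two distinct points, while `X` does not.
-/

open Polynomial Polynomial.Chebyshev

theorem pow_eq_inv_pow_of_pow_two_mul_eq_one {G : Type*} [DivisionMonoid G] {ζ : G} {n : ℕ}
    (h : ζ ^ (2 * n) = 1) : ζ ^ n = ζ⁻¹ ^ n := by
  rw [inv_pow]
  exact eq_inv_of_mul_eq_one_left (by rwa [← pow_add, ← two_mul])

theorem eq_or_eq_inv_of_add_inv_eq_add_inv {L : Type*} [Field L] {u v : L} (hu : u ≠ 0)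
    (hv : v ≠ 0) (h : u + u⁻¹ = v + v⁻¹) : u = v ∨ u = v⁻¹ := by
  have : (u - v) * (u - v⁻¹) = 0 := by
    linear_combination u * h + mul_inv_cancel₀ hv - mul_inv_cancel₀ hu
  simpa [sub_eq_zero] using this

theorem Int.exists_dvd_dvd_dvd_add_sub_eq_one {i j k : ℤ} (hij : IsCoprime i j)
    (hk : IsCoprime (2 * i * j) k) : ∃ a b, i ∣ a ∧ j ∣ b ∧ k ∣ a + b ∧ a - b = 1 := by
  obtain ⟨x, y, hxy⟩ := hij
  obtain ⟨p, q, hpq⟩ := hk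
  -- `t` inverts `2 i j` modulo `k` applied to `1 - 2 i x`, so that `k ∣ 2 i (x + j t) - 1`.
  set t := -(2 * i * x - 1) * p
  refine ⟨i * (x + j * t), j * (i * t - y), dvd_mul_right _ _, dvd_mul_right _ _,
    ⟨(2 * i * x - 1) * q, ?_⟩, by linear_combination hxy⟩
  linear_combination (1 - 2 * i * x) * hpq - hxy

theorem Polynomial.X_notMem_adjoin_of_aeval_eq {R A : Type*} [CommRing R] [CommRing A]
    [Algebra R A] {S : Set R[X]} {x y : A} (hxy : x ≠ y) (h : ∀ p ∈ S, aeval x p = aeval y p) :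
    X ∉ Algebra.adjoin R S := fun hX ↦ hxy <| by
  simpa using Algebra.adjoin_le (S := AlgHom.equalizer (aeval x) (aeval y)) h hX

namespace Polynomial.Chebyshev

section Membership

variable {R : Type*} [CommRing R] {A : Subalgebra R R[X]}

theorem T_mem_of_dvd {m n : ℤ} (hmn : m ∣ n) (hm : T R m ∈ A) : T R n ∈ A := by
  obtain ⟨c, rfl⟩ := hmn
  rw [mul_comm, T_mul, comp_eq_aeval]
  exact Algebra.adjoin_le (Set.singleton_subset_iff.2 hm) (aeval_mem_adjoin_singleton R _)

theorem T_sub_mem {a b : ℤ} (ha : T R a ∈ A) (hb : T R b ∈ A) (hab : T R (a + b) ∈ A) :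
    T R (a - b) ∈ A := by
  rw [eq_sub_of_add_eq' (T_mul_T R a b).symm]
  exact A.sub_mem (A.mul_mem (A.mul_mem (ofNat_mem A 2) ha) hb) hab

theorem X_mem_of_T_mem_of_isCoprime {i j k : ℤ} (hi : T R i ∈ A) (hj : T R j ∈ A)
    (hk : T R k ∈ A) (hij : IsCoprime i j) (hijk : IsCoprime (2 * i * j) k) : X ∈ A := by
  obtain ⟨a, b, ha, hb, hab, h1⟩ := Int.exists_dvd_dvd_dvd_add_sub_eq_one hij hijk
  have := T_sub_mem (T_mem_of_dvd ha hi) (T_mem_of_dvd hb hj) (T_mem_of_dvd hab hk)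
  rwa [h1, T_one] at this

end Membership

theorem X_mem_adjoin_T_triple_of_coprime (R : Type*) [CommRing R] {i j k : ℕ}
    (hij : i.Coprime j) (hik : i.Coprime k) (hjk : j.Coprime k) :
    X ∈ Algebra.adjoin R {T R i, T R j, T R k} := by
  have hi : T R i ∈ Algebra.adjoin R {T R i, T R j, T R k} := Algebra.subset_adjoin (by simp)
  have hj : T R j ∈ Algebra.adjoin R {T R i, T R j, T R k} := Algebra.subset_adjoin (by simp)
  have hk : T R k ∈ Algebra.adjoin R {T R i, T R j, T R k} := Algebra.subset_adjoin (by simp)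
  rcases Nat.even_or_odd k with hk2 | hk2
  · have hi2 : Odd i := Nat.coprime_two_right.1 (hik.coprime_dvd_right hk2.two_dvd)
    refine X_mem_of_T_mem_of_isCoprime hj hk hi hjk.isCoprime ?_
    exact_mod_cast (((Nat.coprime_two_left.2 hi2).mul_left hij.symm).mul_left hik.symm).isCoprime
  · refine X_mem_of_T_mem_of_isCoprime hi hj hk hij.isCoprime ?_
    exact_mod_cast (((Nat.coprime_two_left.2 hk2).mul_left hik).mul_left hjk).isCoprime

theorem T_eval_half_add_inv {L : Type*} [Field L] [NeZero (2 : L)] {u : L} (hu : u ≠ 0)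
    (n : ℕ) : (T L n).eval ((u + u⁻¹) / 2) = (u ^ n + u⁻¹ ^ n) / 2 := by
  have h := congrArg (eval ((u + u⁻¹) / 2)) (C_comp_two_mul_X L n)
  rw [eval_comp, eval_mul, eval_X, eval_ofNat, mul_div_cancel₀ _ two_ne_zero, eval_mul,
    eval_ofNat, ← dickson_one_one_eq_chebyshev_C, dickson_one_one_eval_add_inv u u⁻¹
    (mul_inv_cancel₀ hu)] at h
  rw [h, mul_div_cancel_left₀ _ two_ne_zero]

theorem X_notMem_adjoin_T_pair (K : Type*) [Field K] [CharZero K] {d e : ℕ}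
    (hd : 2 ≤ d) (he : 2 ≤ e) : X ∉ Algebra.adjoin K {T K d, T K e} := by
  have : NeZero (2 * d) := ⟨by omega⟩
  have : NeZero (2 * e) := ⟨by omega⟩
  obtain ⟨α, hα⟩ := HasEnoughRootsOfUnity.exists_primitiveRoot (AlgebraicClosure K) (2 * d)
  obtain ⟨β, hβ⟩ := HasEnoughRootsOfUnity.exists_primitiveRoot (AlgebraicClosure K) (2 * e)
  have hα0 := hα.ne_zero (by omega)
  have hβ0 := hβ.ne_zero (by omega)
  have hαd := pow_eq_inv_pow_of_pow_two_mul_eq_one hα.pow_eq_one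
  have hβe := pow_eq_inv_pow_of_pow_two_mul_eq_one hβ.pow_eq_one
  have hu : α * β ≠ 0 := mul_ne_zero hα0 hβ0
  have hv : α * β⁻¹ ≠ 0 := mul_ne_zero hα0 (inv_ne_zero hβ0)
  refine X_notMem_adjoin_of_aeval_eq (x := (α * β + (α * β)⁻¹) / 2)
    (y := (α * β⁻¹ + (α * β⁻¹)⁻¹) / 2) ?_ ?_
  · intro hxy
    rcases eq_or_eq_inv_of_add_inv_eq_add_inv hu hv (by simpa using hxy) with h | h
    · refine hβ.pow_ne_one_of_pos_of_lt two_ne_zero (by omega) ?_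
      exact sq β ▸ (mul_eq_one_iff_inv_eq₀ hβ0).2 (mul_left_cancel₀ hα0 h).symm
    · refine hα.pow_ne_one_of_pos_of_lt two_ne_zero (by omega) ?_
      rw [mul_inv, inv_inv] at h
      exact sq α ▸ (mul_eq_one_iff_inv_eq₀ hα0).2 (mul_right_cancel₀ hβ0 h).symm
  · rintro p (rfl | rfl)
    · rw [aeval_T, aeval_T, T_eval_half_add_inv hu, T_eval_half_add_inv hv]
      simp only [mul_pow, mul_inv, inv_inv, hαd]
      ring
    · rw [aeval_T, aeval_T, T_eval_half_add_inv hu, T_eval_half_add_inv hv]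
      simp only [mul_pow, mul_inv, inv_inv, hβe]

theorem gcd_eq_one_of_X_mem_adjoin_T_triple (K : Type*) [Field K] [CharZero K] {i j k : ℕ}
    (hi : 0 < i) (hk : 2 ≤ k) (h : X ∈ Algebra.adjoin K {T K i, T K j, T K k}) :
    i.gcd j = 1 := by
  by_contra hg
  have hg2 : 2 ≤ i.gcd j := by have := Nat.gcd_pos_of_pos_left j hi; omega
  refine X_notMem_adjoin_T_pair K hg2 hk (Algebra.adjoin_le ?_ h)
  have hgen : T K (i.gcd j) ∈ Algebra.adjoin K {T K (i.gcd j), T K k} :=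
    Algebra.subset_adjoin (by simp)
  simp only [Set.insert_subset_iff, Set.singleton_subset_iff]
  exact ⟨T_mem_of_dvd (Int.natCast_dvd_natCast.2 (Nat.gcd_dvd_left i j)) hgen,
    T_mem_of_dvd (Int.natCast_dvd_natCast.2 (Nat.gcd_dvd_right i j)) hgen,
    Algebra.subset_adjoin (by simp)⟩

end Polynomial.Chebyshev

theorem chebyshev_triple_embedding_iff (K : Type*) [Field K] [CharZero K]
    (i j k : ℕ) (hi : 2 ≤ i) (hj : 2 ≤ j) (hk : 2 ≤ k) :
    (Polynomial.X ∈ Algebra.adjoin K ({T K i, T K j, T K k} : Set (Polynomial K))) ↔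
      (Nat.gcd i j = 1 ∧ Nat.gcd i k = 1 ∧ Nat.gcd j k = 1) := by
  constructor
  · intro h
    have hikj : X ∈ Algebra.adjoin K {T K i, T K k, T K j} := by rwa [Set.pair_comm]
    have hjki : X ∈ Algebra.adjoin K {T K j, T K k, T K i} := by
      rwa [Set.pair_comm, Set.insert_comm]
    exact ⟨gcd_eq_one_of_X_mem_adjoin_T_triple K (by omega) hk h,
      gcd_eq_one_of_X_mem_adjoin_T_triple K (by omega) hj hikj,
      gcd_eq_one_of_X_mem_adjoin_T_triple K (by omega) hi hjki⟩
  · rintro ⟨hij, hik, hjk⟩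
    exact X_mem_adjoin_T_triple_of_coprime K hij hik hjk
end

section
/- Let i, j, k be integers with i, j, k ≥ 2, i odd, and gcd(i, j) = gcd(i, k) = gcd(j, k) = 1. Then there exist positive integers a, b, c such that |a·j − b·k| = 1 and a·j + b·k = c·i. -/
theorem exists_abc_of_pgcd_one (i j k : ℕ) (hi : 2 ≤ i) (hj : 2 ≤ j) (hk : 2 ≤ k)
    (hodd : Odd i) (hij : Nat.gcd i j = 1) (hik : Nat.gcd i k = 1) (hjk : Nat.gcd j k = 1) :
    ∃ a b c : ℕ, 0 < a ∧ 0 < b ∧ 0 < c ∧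
      ((a : ℤ) * j - (b : ℤ) * k).natAbs = 1 ∧ a * j + b * k = c * i := by
  have hijZ : IsCoprime (i:ℤ) (j:ℤ) := Nat.isCoprime_iff_coprime.2 hij
  have h2i : IsCoprime (2:ℤ) (i:ℤ) := by
    have : IsCoprime ((2:ℕ):ℤ) (i:ℤ) := Nat.isCoprime_iff_coprime.2 hodd.coprime_two_left
    exact_mod_cast this
  have hki : IsCoprime (k:ℤ) (i:ℤ) :=
    Nat.isCoprime_iff_coprime.2 (Nat.coprime_comm.mp hik)
  have h2ki : IsCoprime ((2:ℤ)*k) (i:ℤ) := h2i.mul_left hki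
  have hkj : IsCoprime (k:ℤ) (j:ℤ) := Nat.isCoprime_iff_coprime.2 (Nat.coprime_comm.mp hjk)
  obtain ⟨t, s, hts⟩ := hijZ
  obtain ⟨u, w, huw⟩ := h2ki
  obtain ⟨u', w', huw'⟩ := hkj
  set B : ℤ := (-u)*(s*j) + (-u')*(t*i) with hB
  have hdi : (i:ℤ) ∣ 2*k*B + 1 := ⟨w*s*j - 2*k*u'*t + t, by linear_combination (-(s*j))*huw - hts⟩
  have hdj : (j:ℤ) ∣ k*B + 1 := ⟨-(k*u*s) + w'*t*i + s, by linear_combination (-(t*i))*huw' - hts⟩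
  have hipos : (0:ℤ) < i := by exact_mod_cast (by omega : 0 < i)
  have hjpos : (0:ℤ) < j := by exact_mod_cast (by omega : 0 < j)
  have hkpos : (0:ℤ) < k := by exact_mod_cast (by omega : 0 < k)
  have hmpos : (0:ℤ) < (i:ℤ) * j := mul_pos hipos hjpos
  set B' : ℤ := B % ((i:ℤ)*j) + (i:ℤ)*j with hB'
  have hB'pos : 0 < B' := by
    have := Int.emod_nonneg B (ne_of_gt hmpos)
    omega
  have hq : B' - B = ((i:ℤ)*j) * (1 - B / ((i:ℤ)*j)) := by
    rw [hB', Int.emod_def]; ring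
  obtain ⟨W, hW⟩ := hdi
  obtain ⟨V, hV⟩ := hdj
  have hdi' : (i:ℤ) ∣ 2*k*B' + 1 :=
    ⟨2*k*j*(1 - B / ((i:ℤ)*j)) + W, by linear_combination 2*k*hq + hW⟩
  have hdj' : (j:ℤ) ∣ k*B' + 1 :=
    ⟨k*i*(1 - B / ((i:ℤ)*j)) + V, by linear_combination k*hq + hV⟩
  obtain ⟨A, hA⟩ := hdj'
  obtain ⟨C, hC⟩ := hdi'
  have hApos : 0 < A := by nlinarith
  have hCpos : 0 < C := by nlinarith
  refine ⟨A.toNat, B'.toNat, C.toNat, by omega, by omega, by omega, ?_, ?_⟩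
  · have h1 : ((A.toNat : ℤ)) = A := Int.toNat_of_nonneg hApos.le
    have h2 : ((B'.toNat : ℤ)) = B' := Int.toNat_of_nonneg hB'pos.le
    have : (A.toNat : ℤ) * j - (B'.toNat : ℤ) * k = 1 := by
      rw [h1, h2]; linear_combination -hA
    rw [this]; rfl
  · have h1 : ((A.toNat : ℤ)) = A := Int.toNat_of_nonneg hApos.le
    have h2 : ((B'.toNat : ℤ)) = B' := Int.toNat_of_nonneg hB'pos.le
    have h3 : ((C.toNat : ℤ)) = C := Int.toNat_of_nonneg hCpos.le
    have : (A.toNat : ℤ) * j + (B'.toNat : ℤ) * k = (C.toNat : ℤ) * i := by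
      rw [h1, h2, h3]; linear_combination hC - hA
    exact_mod_cast this
end

section
/- Let K be a field of characteristic zero and let i, j, k be positive integers with 1 ∈ {i, j, k}. Let ψ : MvPolynomial (Fin 3) K → K[t] be the K-algebra homomorphism sending the three variables X₀, X₁, X₂ to T_i, T_j, T_k respectively. Then there exists a K-algebra automorphism β of MvPolynomial (Fin 3) K such that the composite ψ ∘ β sends X₀ ↦ t, X₁ ↦ 0, X₂ ↦ 0; that is, the line embedding (T_i, T_j, T_k) is rectifiable (algebraically equivalent to the standard embedding t ↦ (t, 0, 0)). -/
open Polynomial Polynomial.Chebyshev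

noncomputable def shearHom (K : Type*) [CommRing K] (c1 c2 : Polynomial K) :
    MvPolynomial (Fin 3) K →ₐ[K] MvPolynomial (Fin 3) K :=
  MvPolynomial.aeval ![MvPolynomial.X 0,
    MvPolynomial.X 1 + Polynomial.aeval (MvPolynomial.X 0) c1,
    MvPolynomial.X 2 + Polynomial.aeval (MvPolynomial.X 0) c2]

lemma shearHom_X0 (K : Type*) [CommRing K] (c1 c2 : Polynomial K) :
    shearHom K c1 c2 (MvPolynomial.X 0) = MvPolynomial.X 0 := by
  simp [shearHom]

lemma shearHom_X1 (K : Type*) [CommRing K] (c1 c2 : Polynomial K) :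
    shearHom K c1 c2 (MvPolynomial.X 1) =
      MvPolynomial.X 1 + Polynomial.aeval (MvPolynomial.X 0) c1 := by
  simp [shearHom]

lemma shearHom_X2 (K : Type*) [CommRing K] (c1 c2 : Polynomial K) :
    shearHom K c1 c2 (MvPolynomial.X 2) =
      MvPolynomial.X 2 + Polynomial.aeval (MvPolynomial.X 0) c2 := by
  simp [shearHom]

lemma shearHom_aeval_X0 (K : Type*) [CommRing K] (c1 c2 p : Polynomial K) :
    shearHom K c1 c2 (Polynomial.aeval (MvPolynomial.X 0) p) =
      Polynomial.aeval (MvPolynomial.X 0) p := by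
  rw [← Polynomial.aeval_algHom_apply, shearHom_X0]

lemma shearHom_comp (K : Type*) [CommRing K] (c1 c2 : Polynomial K) :
    (shearHom K c1 c2).comp (shearHom K (-c1) (-c2)) = AlgHom.id K _ := by
  apply MvPolynomial.algHom_ext
  intro n
  fin_cases n
  · show shearHom K c1 c2 (shearHom K (-c1) (-c2) (MvPolynomial.X 0)) = MvPolynomial.X 0
    simp [shearHom_X0]
  · show shearHom K c1 c2 (shearHom K (-c1) (-c2) (MvPolynomial.X 1)) = MvPolynomial.X 1
    rw [shearHom_X1, map_add, shearHom_X1, shearHom_aeval_X0, map_neg]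
    ring
  · show shearHom K c1 c2 (shearHom K (-c1) (-c2) (MvPolynomial.X 2)) = MvPolynomial.X 2
    rw [shearHom_X2, map_add, shearHom_X2, shearHom_aeval_X0, map_neg]
    ring

noncomputable def shearEquiv (K : Type*) [CommRing K] (c1 c2 : Polynomial K) :
    MvPolynomial (Fin 3) K ≃ₐ[K] MvPolynomial (Fin 3) K :=
  AlgEquiv.ofAlgHom (shearHom K c1 c2) (shearHom K (-c1) (-c2))
    (shearHom_comp K c1 c2)
    (by simpa using shearHom_comp K (-c1) (-c2))

lemma shearEquiv_apply (K : Type*) [CommRing K] (c1 c2 : Polynomial K)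
    (p : MvPolynomial (Fin 3) K) : shearEquiv K c1 c2 p = shearHom K c1 c2 p := rfl

theorem chebyshev_triple_rectifiable_of_one_mem (K : Type*) [Field K] [CharZero K]
    (i j k : ℕ) (hi : 0 < i) (hj : 0 < j) (hk : 0 < k)
    (h1 : i = 1 ∨ j = 1 ∨ k = 1)
    (ψ : MvPolynomial (Fin 3) K →ₐ[K] Polynomial K)
    (hψ0 : ψ (MvPolynomial.X 0) = T K i)
    (hψ1 : ψ (MvPolynomial.X 1) = T K j)
    (hψ2 : ψ (MvPolynomial.X 2) = T K k) :
    ∃ β : MvPolynomial (Fin 3) K ≃ₐ[K] MvPolynomial (Fin 3) K,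
      ψ (β (MvPolynomial.X 0)) = Polynomial.X ∧
      ψ (β (MvPolynomial.X 1)) = 0 ∧
      ψ (β (MvPolynomial.X 2)) = 0 := by
  rcases h1 with h | h | h
  · subst h
    refine ⟨shearEquiv K (-(T K j)) (-(T K k)), ?_, ?_, ?_⟩
    · rw [shearEquiv_apply, shearHom_X0, hψ0]
      norm_num
    · rw [shearEquiv_apply, shearHom_X1, map_add, hψ1,
        ← Polynomial.aeval_algHom_apply, hψ0]
      norm_num
    · rw [shearEquiv_apply, shearHom_X2, map_add, hψ2,
        ← Polynomial.aeval_algHom_apply, hψ0]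
      norm_num
  · subst h
    refine ⟨(shearEquiv K (-(T K i)) (-(T K k))).trans
      (MvPolynomial.renameEquiv K (Equiv.swap (0 : Fin 3) 1)), ?_, ?_, ?_⟩
    · simp only [AlgEquiv.trans_apply, shearEquiv_apply,
        shearHom_X0, MvPolynomial.renameEquiv_apply, MvPolynomial.rename_X,
        Equiv.swap_apply_left]
      rw [hψ1]; norm_num
    · simp only [AlgEquiv.trans_apply, shearEquiv_apply,
        shearHom_X1, map_add, MvPolynomial.renameEquiv_apply,
        MvPolynomial.rename_X, Equiv.swap_apply_right,
        ← Polynomial.aeval_algHom_apply]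
      simp only [MvPolynomial.rename_X, Equiv.swap_apply_left]
      rw [hψ0, hψ1]
      norm_num
    · simp only [AlgEquiv.trans_apply, shearEquiv_apply,
        shearHom_X2, map_add, MvPolynomial.renameEquiv_apply,
        ← Polynomial.aeval_algHom_apply]
      simp only [MvPolynomial.rename_X, Equiv.swap_apply_left]
      rw [show ((Equiv.swap (0 : Fin 3) 1) 2) = 2 by decide, hψ2, hψ1]
      norm_num
  · subst h
    refine ⟨(shearEquiv K (-(T K j)) (-(T K i))).trans
      (MvPolynomial.renameEquiv K (Equiv.swap (0 : Fin 3) 2)), ?_, ?_, ?_⟩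
    · simp only [AlgEquiv.trans_apply, shearEquiv_apply,
        shearHom_X0, MvPolynomial.renameEquiv_apply, MvPolynomial.rename_X,
        Equiv.swap_apply_left]
      rw [hψ2]; norm_num
    · simp only [AlgEquiv.trans_apply, shearEquiv_apply,
        shearHom_X1, map_add, MvPolynomial.renameEquiv_apply,
        ← Polynomial.aeval_algHom_apply]
      simp only [MvPolynomial.rename_X, Equiv.swap_apply_left]
      rw [show ((Equiv.swap (0 : Fin 3) 2) 1) = 1 by decide, hψ1, hψ2]
      norm_num
    · simp only [AlgEquiv.trans_apply, shearEquiv_apply,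
        shearHom_X2, map_add, MvPolynomial.renameEquiv_apply,
        ← Polynomial.aeval_algHom_apply]
      simp only [MvPolynomial.rename_X, Equiv.swap_apply_left]
      rw [show ((Equiv.swap (0 : Fin 3) 2) 2) = 0 by decide, hψ0, hψ2]
      norm_num
end

section
/- Let m, n be positive integers with gcd(m, n) = 1. Then, as real polynomials, U_{m−1} and U_{n−1} are coprime (they have no common root, equivalently their gcd in ℝ[t] is a unit), the product U_{m−1}·U_{n−1} divides U_{mn−1} in ℝ[t], and the quotient U_{mn−1}/(U_{m−1}·U_{n−1}) has degree (m−1)(n−1). -/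
/-!
The sine addition formula gives `U (a + b - 1) = U (a - 1) * T b + T a * U (b - 1)`, and `T a` is
coprime to `U (a - 1)` because consecutive `U`'s are. So modulo `U (a - 1)`, `U (a + b - 1)` is
`U (b - 1)` times a factor coprime to `U (a - 1)`, and coprimality of `U (m - 1)` and `U (n - 1)` follows
Euclid's algorithm on `(m, n)` down to `U 0 = 1`. Iterating the same formula gives
`U (m * n - 1) = U (m - 1) * (U (n - 1)).comp (T m)`, so both factors divide `U (m * n - 1)`,
and the quotient has degree `(m * n - 1) - (m - 1) - (n - 1) = (m - 1) * (n - 1)`.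
-/

open Polynomial Polynomial.Chebyshev

namespace Polynomial.Chebyshev

variable (R : Type*) [CommRing R]

theorem U_add_sub_one (a b : ℤ) :
    U R (a + b - 1) = U R (a - 1) * T R b + T R a * U R (b - 1) := by
  induction b using Polynomial.Chebyshev.induct with
  | zero => simp
  | one => simpa [mul_comm] using U_eq_X_mul_U_add_T R (a - 1)
  | add_two b ih₁ ih₀ =>
    linear_combination (norm := ring_nf) U_add_two R (a + b - 1) + 2 * X * ih₁ - ih₀ -
      U R (a - 1) * T_add_two R b - T R a * U_add_two R (b - 1)
  | neg_add_one b ih₀ ih₁ =>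
    linear_combination (norm := ring_nf) U_sub_one R (a - b - 1) + 2 * X * ih₀ - ih₁ -
      U R (a - 1) * T_sub_one R (-b) - T R a * U_sub_one R (-b - 1)

theorem isCoprime_U_U_add_one (n : ℤ) : IsCoprime (U R n) (U R (n + 1)) := by
  induction n using Int.induction_on with
  | zero => simp [isCoprime_one_left]
  | succ n ih =>
    rw [add_assoc, one_add_one_eq_two, U_add_two, sub_eq_neg_add, mul_comm (2 * X),
      IsCoprime.add_mul_left_right_iff]
    exact ih.symm.neg_right
  | pred n ih =>
    rw [sub_add_cancel, U_sub_one, sub_eq_neg_add, mul_comm (2 * X),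
      IsCoprime.add_mul_left_left_iff]
    exact ih.symm.neg_left

theorem isCoprime_U_sub_one_T (n : ℤ) : IsCoprime (U R (n - 1)) (T R n) := by
  rw [T_eq_U_sub_X_mul_U, sub_eq_add_neg (U R n), ← neg_mul, mul_comm (-X),
    IsCoprime.add_mul_left_right_iff]
  simpa using isCoprime_U_U_add_one R (n - 1)

theorem isCoprime_U_sub_one_mul_add {a b : ℤ} (h : IsCoprime (U R (a - 1)) (U R (b - 1)))
    (q : ℕ) : IsCoprime (U R (a - 1)) (U R (q * a + b - 1)) := by
  induction q with
  | zero => simpa using h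
  | succ q ih =>
    rw [show ((q + 1 : ℕ) : ℤ) * a + b - 1 = a + (q * a + b) - 1 by push_cast; ring,
      U_add_sub_one, IsCoprime.mul_add_left_right_iff]
    exact (isCoprime_U_sub_one_T R a).mul_right ih

theorem isCoprime_U_sub_one {m n : ℕ} (h : m.Coprime n) :
    IsCoprime (U R (m - 1)) (U R (n - 1)) := by
  induction m, n using Nat.gcd.induction with
  | H0 n => simp_all [isCoprime_one_right]
  | H1 m n _ ih =>
    have hrec := isCoprime_U_sub_one_mul_add R
      (ih (by rwa [Nat.Coprime, ← Nat.gcd_rec])).symm (n / m)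
    rwa [← Nat.cast_mul, ← Nat.cast_add, Nat.div_add_mod'] at hrec

theorem U_mul_sub_one (m n : ℤ) :
    U R (m * n - 1) = U R (m - 1) * (U R (n - 1)).comp (T R m) := by
  have hT (k : ℤ) : T R (m * k) = (T R k).comp (T R m) := by rw [mul_comm, T_mul]
  induction n using Int.induction_on with
  | zero => simp
  | succ n ih =>
    have hU : U R n = X * U R (n - 1) + T R n := by
      simpa using U_eq_X_mul_U_add_T R (n - 1)
    rw [show m * (n + 1) - 1 = m * n + m - 1 by ring, U_add_sub_one, ih, hT,
      add_sub_cancel_right, hU, add_comp, mul_comp, X_comp]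
    ring
  | pred n ih =>
    have hU : U R (-n - 2) = X * U R (-n - 1) - T R (-n) := by
      linear_combination (norm := ring_nf) T_eq_X_mul_U_sub_U R (-n - 2)
    rw [show m * (-n - 1) - 1 = m * -n + -m - 1 by ring, U_add_sub_one, ih, hT, T_neg,
      U_neg_sub_one R m, show (-n : ℤ) - 1 - 1 = -n - 2 by ring, hU, sub_comp, mul_comp, X_comp]
    ring

theorem U_sub_one_dvd_U_mul_sub_one (m n : ℤ) : U R (m - 1) ∣ U R (m * n - 1) :=
  ⟨_, U_mul_sub_one R m n⟩

theorem U_sub_one_mul_U_sub_one_dvd {m n : ℕ} (h : m.Coprime n) :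
    U R (m - 1) * U R (n - 1) ∣ U R (m * n - 1) :=
  (isCoprime_U_sub_one R h).mul_dvd (U_sub_one_dvd_U_mul_sub_one R m n)
    (mul_comm (m : ℤ) n ▸ U_sub_one_dvd_U_mul_sub_one R n m)

theorem natDegree_U_natCast_sub_one [IsDomain R] [NeZero (2 : R)] {k : ℕ} (hk : 0 < k) :
    (U R (k - 1)).natDegree = k - 1 := by
  rw [natDegree_U]; omega

theorem U_natCast_sub_one_ne_zero [IsDomain R] [NeZero (2 : R)] {k : ℕ} (hk : 0 < k) :
    U R (k - 1) ≠ 0 :=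
  U_ne_zero R _ (by omega)

theorem natDegree_U_mul_sub_one_div (K : Type*) [Field K] [NeZero (2 : K)] {m n : ℕ}
    (hm : 0 < m) (hn : 0 < n) (h : m.Coprime n) :
    (U K (m * n - 1) / (U K (m - 1) * U K (n - 1))).natDegree = (m - 1) * (n - 1) := by
  obtain ⟨c, hc⟩ := U_sub_one_mul_U_sub_one_dvd K h
  have hmn : 0 < m * n := Nat.mul_pos hm hn
  have hUm := U_natCast_sub_one_ne_zero K hm
  have hUn := U_natCast_sub_one_ne_zero K hn
  have hc0 : c ≠ 0 := by
    rintro rfl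
    exact U_natCast_sub_one_ne_zero K hmn (by rw [Nat.cast_mul, hc, mul_zero])
  rw [hc, mul_div_cancel_left₀ c (mul_ne_zero hUm hUn)]
  have hdeg := congrArg natDegree hc
  rw [natDegree_mul (mul_ne_zero hUm hUn) hc0, natDegree_mul hUm hUn,
    natDegree_U_natCast_sub_one K hm, natDegree_U_natCast_sub_one K hn, ← Nat.cast_mul,
    natDegree_U_natCast_sub_one K hmn] at hdeg
  have hsplit : m * n - 1 = (m - 1) + (n - 1) + (m - 1) * (n - 1) := by
    zify [hm, hn, hmn]
    ring
  omega

end Polynomial.Chebyshev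

theorem chebyshev_U_coprime_divides (m n : ℕ) (hm : 0 < m) (hn : 0 < n)
    (hgcd : Nat.gcd m n = 1) :
    IsCoprime (U ℝ ((m : ℤ) - 1)) (U ℝ ((n : ℤ) - 1)) ∧
    (U ℝ ((m : ℤ) - 1) * U ℝ ((n : ℤ) - 1)) ∣ U ℝ ((m : ℤ) * n - 1) ∧
    (U ℝ ((m : ℤ) * n - 1) / (U ℝ ((m : ℤ) - 1) * U ℝ ((n : ℤ) - 1))).natDegree =
      (m - 1) * (n - 1) :=
  ⟨isCoprime_U_sub_one ℝ hgcd, U_sub_one_mul_U_sub_one_dvd ℝ hgcd,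
    natDegree_U_mul_sub_one_div ℝ hm hn hgcd⟩
end

section
/- Let m, n be integers with 3 ≤ m < n and gcd(m, n) = 1, and let F ∈ ℝ[t] be the polynomial satisfying F·U_{m−1}·U_{n−1} = U_{mn−1}. Then the map φ : ℝ → ℝ³ given by φ(t) = (T_m(t), T_n(t), F′(t)) is injective, and its derivative never vanishes: for every t ∈ ℝ, (T_m′(t), T_n′(t), F″(t)) ≠ (0, 0, 0) (indeed already (T_m′(t), T_n′(t)) ≠ (0,0)). Hence φ is a polynomial embedding of the real line in ℝ³. -/
/-!
Outside `[-1, 1]` everything is monotonicity and parity: `|T_k t| > 1` there, `T_k` is strictly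
increasing on `[1, ∞)`, so `T_m t = T_m t'` forces `|t| = |t'|`, and `t' = -t` would make both
`m` and `n` even. Inside, write `t = cos ψ`; then `T_k t = cos (k ψ)`, and coprimality of `m, n`
turns agreement of `T_m` and `T_n` into `ψ' = ±ψ`, except at a double point of the Lissajous
curve `(T_m, T_n)`, where `m ψ' ≡ m ψ` and `n ψ' ≡ -n ψ`. Differentiating
`F · T_m' · T_n' = T_{mn}'` at a root of `T_{mn}'` and using the Chebyshev differential equation
gives `F'(cos ψ) · m sin (m ψ) · n sin (n ψ) = -(mn)² cos (mn ψ)`, so `F'` takes opposite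
values at the two branches of a double point, nonzero since there `cos (mn ψ) = ±1`.
The derivative never vanishes because `T_k' = k U_{k-1}`, `U_{k-1}` has no roots outside
`(-1, 1)`, `U_{k-1}(cos ψ) sin ψ = sin (k ψ)`, and `sin (m ψ) = sin (n ψ) = 0` would force
`sin ψ = 0`.
-/

open Polynomial Polynomial.Chebyshev

theorem IsCoprime.eq_zero_of_smul_eq_zero {R M : Type*} [CommSemiring R] [AddCommMonoid M]
    [Module R M] {a b : R} (h : IsCoprime a b) {x : M} (ha : a • x = 0) (hb : b • x = 0) :
    x = 0 := by
  obtain ⟨u, v, huv⟩ := h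
  rw [← one_smul R x, ← huv, add_smul, mul_smul, mul_smul, ha, hb, smul_zero, smul_zero,
    add_zero]

theorem Polynomial.eval_derivative_mul_eq_of_mul_eq {R : Type*} [CommRing R] [NoZeroDivisors R]
    {F G H : R[X]} (h : F * G = H) {x : R} (hG : G.eval x ≠ 0) (hH : H.eval x = 0) :
    (derivative F).eval x * G.eval x = (derivative H).eval x := by
  have hF : F.eval x = 0 := by
    rw [← h, eval_mul, mul_eq_zero] at hH
    exact hH.resolve_right hG
  rw [← h, derivative_mul, eval_add, eval_mul, eval_mul, hF, zero_mul, add_zero]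

namespace Real.Angle

theorem exists_cos_eq {x : ℝ} (hx : |x| ≤ 1) : ∃ ψ : Angle, cos ψ = x :=
  ⟨arccos x, by rw [cos_coe, cos_arccos (abs_le.mp hx).1 (abs_le.mp hx).2]⟩

theorem sin_eq_zero_iff_two_zsmul_eq_zero {θ : Angle} : sin θ = 0 ↔ (2 : ℤ) • θ = 0 := by
  rw [sin_eq_zero_iff, two_zsmul_eq_zero_iff]

theorem sin_eq_zero_iff_neg_eq_self {θ : Angle} : sin θ = 0 ↔ -θ = θ := by
  rw [sin_eq_zero_iff, neg_eq_self_iff]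

theorem intCast_mul_sin_zsmul_eq_zero_iff (n : ℤ) (θ : Angle) :
    (n : ℝ) * sin (n • θ) = 0 ↔ sin (n • θ) = 0 := by
  rcases eq_or_ne n 0 with rfl | hn <;> simp [*]

end Real.Angle

namespace Polynomial.Chebyshev

section OutsideUnitInterval

open Real

theorem eval_U_real_pos (k : ℕ) {x : ℝ} (hx : 1 ≤ x) : 0 < (U ℝ k).eval x := by
  rcases hx.eq_or_lt with rfl | hx
  · rw [U_eval_one]
    positivity
  have hs := arcosh_pos hx
  have h := U_real_cosh (arcosh x) k
  rw [cosh_arcosh hx.le] at h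
  have : 0 < (U ℝ k).eval x * sinh (arcosh x) := h ▸ sinh_pos_iff.mpr (by positivity)
  exact (pos_iff_pos_of_mul_pos this).mpr (sinh_pos_iff.mpr hs)

theorem eval_U_real_ne_zero (k : ℕ) {x : ℝ} (hx : 1 ≤ |x|) : (U ℝ k).eval x ≠ 0 := by
  rcases le_abs'.mp hx with hx | hx
  · rw [← neg_neg x, U_eval_neg]
    exact mul_ne_zero (by simp) (eval_U_real_pos k (le_neg_of_le_neg hx)).ne'
  · exact (eval_U_real_pos k hx).ne'

theorem derivative_T_real_eval_ne_zero {k : ℕ} (hk : k ≠ 0) {x : ℝ} (hx : 1 ≤ |x|) :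
    (derivative (T ℝ k)).eval x ≠ 0 := by
  obtain ⟨j, rfl⟩ := Nat.exists_eq_succ_of_ne_zero hk
  rw [T_derivative_eq_U, show ((j.succ : ℕ) : ℤ) - 1 = j by push_cast; ring, eval_mul]
  exact mul_ne_zero (by simp; positivity) (eval_U_real_ne_zero j hx)

theorem strictMonoOn_eval_T_real {n : ℕ} (hn : n ≠ 0) :
    StrictMonoOn (T ℝ n).eval (Set.Ici 1) := by
  intro x hx y hy hxy
  rw [Set.mem_Ici] at hx hy
  change (T ℝ n).eval x < (T ℝ n).eval y
  rw [← cosh_arcosh hx, ← cosh_arcosh hy, T_real_cosh, T_real_cosh, cosh_lt_cosh, abs_mul,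
    abs_mul, abs_of_nonneg (arcosh_nonneg hx), abs_of_nonneg (arcosh_nonneg hy)]
  exact mul_lt_mul_of_pos_left ((arcosh_lt_arcosh (by linarith) (by linarith)).mpr hxy)
    (by simpa using Nat.pos_of_ne_zero hn)

theorem abs_eval_T_real_eq_eval_abs (n : ℤ) {x : ℝ} (hx : 1 ≤ |x|) :
    |(T ℝ n).eval x| = (T ℝ n).eval |x| := by
  rw [← abs_of_pos ((one_le_eval_T_real n hx).trans_lt' one_pos)]
  rcases abs_choice x with h | h <;> rw [h]
  simp [abs_mul]

theorem even_of_eval_T_real_neg_eq (n : ℤ) {x : ℝ} (hx : 1 ≤ |x|)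
    (h : (T ℝ n).eval (-x) = (T ℝ n).eval x) : Even n := by
  have hT : (T ℝ n).eval x ≠ 0 := fun h0 => by
    have := one_le_abs_eval_T_real n hx
    rw [h0, abs_zero] at this
    linarith
  rw [T_eval_neg] at h
  rw [← Int.negOnePow_eq_one_iff]
  have : ((n.negOnePow : ℤ) : ℝ) = 1 := mul_right_cancel₀ hT (by rw [one_mul]; exact h)
  exact Units.val_eq_one.mp (by exact_mod_cast this)

theorem eq_of_eval_T_real_eq_of_one_le_abs {m n : ℕ} (hm : m ≠ 0) (hmn : m.Coprime n)
    {x y : ℝ} (hx : 1 ≤ |x|) (hy : 1 ≤ |y|) (hTm : (T ℝ m).eval x = (T ℝ m).eval y)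
    (hTn : (T ℝ n).eval x = (T ℝ n).eval y) : x = y := by
  have habs : |x| = |y| := (strictMonoOn_eval_T_real hm).injOn hx hy <| by
    rw [← abs_eval_T_real_eq_eval_abs _ hx, ← abs_eval_T_real_eq_eval_abs _ hy, hTm]
  rcases abs_eq_abs.mp habs with h | rfl
  · exact h
  have hm2 := even_of_eval_T_real_neg_eq _ hy hTm
  have hn2 := even_of_eval_T_real_neg_eq _ hy hTn
  rw [Int.even_coe_nat] at hm2 hn2
  exact absurd hmn (Nat.not_coprime_of_dvd_of_dvd one_lt_two hm2.two_dvd hn2.two_dvd)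

end OutsideUnitInterval

section Angle

open Real.Angle

theorem T_real_angle_cos (n : ℤ) (ψ : Real.Angle) :
    (T ℝ n).eval (cos ψ) = cos (n • ψ) := by
  induction ψ using Real.Angle.induction_on with
  | h θ => rw [cos_coe, T_real_cos, ← coe_zsmul, cos_coe, zsmul_eq_mul]

theorem derivative_T_real_angle_cos_mul_sin (n : ℤ) (ψ : Real.Angle) :
    (derivative (T ℝ n)).eval (cos ψ) * sin ψ = n * sin (n • ψ) := by
  induction ψ using Real.Angle.induction_on with
  | h θ =>
    rw [cos_coe, sin_coe, T_derivative_eq_U, eval_mul, eval_intCast, mul_assoc, U_real_cos,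
      ← coe_zsmul, sin_coe, zsmul_eq_mul]
    push_cast
    ring_nf

theorem derivative_T_real_angle_cos_ne_zero_or {m n : ℤ} (hmn : IsCoprime m n)
    {ψ : Real.Angle} (hψ : sin ψ ≠ 0) :
    (derivative (T ℝ m)).eval (cos ψ) ≠ 0 ∨ (derivative (T ℝ n)).eval (cos ψ) ≠ 0 := by
  have hkill (k : ℤ) (hk : (derivative (T ℝ k)).eval (cos ψ) = 0) :
      k • (2 : ℤ) • ψ = 0 := by
    have h := derivative_T_real_angle_cos_mul_sin k ψ
    rwa [hk, zero_mul, eq_comm, intCast_mul_sin_zsmul_eq_zero_iff,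
      sin_eq_zero_iff_two_zsmul_eq_zero, smul_comm] at h
  by_contra! h
  exact hψ <| sin_eq_zero_iff_two_zsmul_eq_zero.mpr <|
    hmn.eq_zero_of_smul_eq_zero (hkill m h.1) (hkill n h.2)

variable {m n : ℤ} {F : ℝ[X]}

theorem mul_derivative_T_mul_derivative_T
    (hF : F * (U ℝ (m - 1) * U ℝ (n - 1)) = U ℝ (m * n - 1)) :
    F * (derivative (T ℝ m) * derivative (T ℝ n)) = derivative (T ℝ (m * n)) := by
  simp only [T_derivative_eq_U, ← hF]
  push_cast
  ring

theorem derivative_eval_angle_cos_mul_of_sin_zsmul_eq_zero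
    (hF : F * (U ℝ (m - 1) * U ℝ (n - 1)) = U ℝ (m * n - 1)) {ψ : Real.Angle}
    (hm : sin (m • ψ) ≠ 0) (hn : sin (n • ψ) ≠ 0) (hmn : sin ((m * n) • ψ) = 0) :
    (derivative F).eval (cos ψ) * (m * sin (m • ψ) * (n * sin (n • ψ))) =
      -(m * n) ^ 2 * cos ((m * n) • ψ) := by
  have hTm := derivative_T_real_angle_cos_mul_sin m ψ
  have hTn := derivative_T_real_angle_cos_mul_sin n ψ
  have hTmn := derivative_T_real_angle_cos_mul_sin (m * n) ψ
  replace hm : _ ∧ _ :=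
    mul_ne_zero_iff.mp <| hTm ▸ mt (intCast_mul_sin_zsmul_eq_zero_iff m ψ).mp hm
  replace hn : _ ∧ _ :=
    mul_ne_zero_iff.mp <| hTn ▸ mt (intCast_mul_sin_zsmul_eq_zero_iff n ψ).mp hn
  have hroot : (derivative (T ℝ (m * n))).eval (cos ψ) = 0 := by
    rw [hmn, mul_zero, mul_eq_zero] at hTmn
    exact hTmn.resolve_right hm.2
  have hFG := eval_derivative_mul_eq_of_mul_eq (mul_derivative_T_mul_derivative_T hF)
    (by rw [eval_mul]; exact mul_ne_zero hm.1 hn.1) hroot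
  have hODE := congrArg (eval (cos ψ))
    (one_sub_X_sq_mul_derivative_derivative_T_eq_poly_in_T (R := ℝ) (m * n))
  simp only [Function.iterate_succ, Function.iterate_zero, Function.comp_apply, id, eval_mul,
    eval_sub, eval_one, eval_pow, eval_X, hroot, T_real_angle_cos, eval_intCast] at hODE hFG
  rw [← hTm, ← hTn]
  push_cast at hODE
  linear_combination (sin ψ) ^ 2 * hFG + hODE +
    (derivative (derivative (T ℝ (m * n)))).eval (cos ψ) * Real.Angle.cos_sq_add_sin_sq ψ

theorem derivative_eval_angle_cos_ne
    (hF : F * (U ℝ (m - 1) * U ℝ (n - 1)) = U ℝ (m * n - 1)) {ψ ψ' : Real.Angle}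
    (hm : m • ψ = m • ψ') (hn : n • ψ = -(n • ψ')) (hm' : m • ψ ≠ -(m • ψ'))
    (hn' : n • ψ ≠ n • ψ') :
    (derivative F).eval (cos ψ) ≠ (derivative F).eval (cos ψ') := by
  have hn_neg : -(n • ψ) = n • ψ' := neg_eq_iff_eq_neg.mpr hn
  have hsm : sin (m • ψ) ≠ 0 := by
    rw [Ne, sin_eq_zero_iff_neg_eq_self]
    exact fun h => hm' (by rw [← hm, h])
  have hsn : sin (n • ψ) ≠ 0 := by
    rw [Ne, sin_eq_zero_iff_neg_eq_self]
    exact fun h => hn' (by rw [← h, hn, neg_neg])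
  have hmn' : (m * n) • ψ' = (m * n) • ψ := by rw [mul_comm, mul_zsmul, mul_zsmul, hm]
  have hmn : sin ((m * n) • ψ) = 0 := by
    rw [sin_eq_zero_iff_neg_eq_self]
    conv_rhs => rw [← hmn', mul_zsmul, ← hn_neg, zsmul_neg, ← mul_zsmul]
  have h := derivative_eval_angle_cos_mul_of_sin_zsmul_eq_zero hF hsm hsn hmn
  have h' := derivative_eval_angle_cos_mul_of_sin_zsmul_eq_zero hF (ψ := ψ') (by rwa [← hm])
    (by rwa [← hn_neg, Real.Angle.sin_neg, neg_ne_zero]) (by rwa [hmn'])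
  rw [← hm, ← hn_neg, Real.Angle.sin_neg, hmn'] at h'
  have hm0 : (m : ℝ) ≠ 0 := fun h0 => hsm (by simp [Int.cast_eq_zero.mp h0])
  have hn0 : (n : ℝ) ≠ 0 := fun h0 => hsn (by simp [Int.cast_eq_zero.mp h0])
  intro hF'
  rw [← hF'] at h'
  have hc : -(m * n : ℝ) ^ 2 * cos ((m * n) • ψ) = 0 := by linear_combination -(h + h') / 2
  have hpyth := Real.Angle.cos_sq_add_sin_sq ((m * n) • ψ)
  rw [(mul_eq_zero.mp hc).resolve_left (by simp [hm0, hn0]), hmn] at hpyth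
  norm_num at hpyth

theorem cos_eq_of_eval_T_eq_of_derivative_eval_eq (hmn : IsCoprime m n)
    (hF : F * (U ℝ (m - 1) * U ℝ (n - 1)) = U ℝ (m * n - 1)) {ψ ψ' : Real.Angle}
    (hTm : (T ℝ m).eval (cos ψ) = (T ℝ m).eval (cos ψ'))
    (hTn : (T ℝ n).eval (cos ψ) = (T ℝ n).eval (cos ψ'))
    (hF' : (derivative F).eval (cos ψ) = (derivative F).eval (cos ψ')) :
    cos ψ = cos ψ' := by
  rw [T_real_angle_cos, T_real_angle_cos, cos_eq_iff_eq_or_eq_neg] at hTm hTn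
  rw [cos_eq_iff_eq_or_eq_neg]
  have hsub (hm : m • ψ = m • ψ') (hn : n • ψ = n • ψ') : ψ = ψ' :=
    sub_eq_zero.mp <| hmn.eq_zero_of_smul_eq_zero
      (by rw [zsmul_sub, hm, sub_self]) (by rw [zsmul_sub, hn, sub_self])
  have hadd (hm : m • ψ = -(m • ψ')) (hn : n • ψ = -(n • ψ')) : ψ = -ψ' :=
    eq_neg_of_add_eq_zero_left <| hmn.eq_zero_of_smul_eq_zero
      (by rw [zsmul_add, hm, neg_add_cancel]) (by rw [zsmul_add, hn, neg_add_cancel])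
  have hF_comm : F * (U ℝ (n - 1) * U ℝ (m - 1)) = U ℝ (n * m - 1) := by
    rw [mul_comm (U ℝ _), mul_comm n]
    exact hF
  rcases hTm with hm | hm <;> rcases hTn with hn | hn
  · exact .inl (hsub hm hn)
  · by_cases hm' : m • ψ = -(m • ψ')
    · exact .inr (hadd hm' hn)
    by_cases hn' : n • ψ = n • ψ'
    · exact .inl (hsub hm hn')
    exact absurd hF' (derivative_eval_angle_cos_ne hF hm hn hm' hn')
  · by_cases hn' : n • ψ = -(n • ψ')
    · exact .inr (hadd hm hn')
    by_cases hm' : m • ψ = m • ψ'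
    · exact .inl (hsub hm' hn)
    exact absurd hF' (derivative_eval_angle_cos_ne hF_comm hn hm hn' hm')
  · exact .inr (hadd hm hn)

end Angle

theorem eq_of_eval_T_real_eq_of_abs_le_one {m n : ℤ} {F : ℝ[X]} (hmn : IsCoprime m n)
    (hF : F * (U ℝ (m - 1) * U ℝ (n - 1)) = U ℝ (m * n - 1)) {x y : ℝ}
    (hx : |x| ≤ 1) (hy : |y| ≤ 1) (hTm : (T ℝ m).eval x = (T ℝ m).eval y)
    (hTn : (T ℝ n).eval x = (T ℝ n).eval y)
    (hF' : (derivative F).eval x = (derivative F).eval y) : x = y := by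
  obtain ⟨ψ, rfl⟩ := Real.Angle.exists_cos_eq hx
  obtain ⟨ψ', rfl⟩ := Real.Angle.exists_cos_eq hy
  exact cos_eq_of_eval_T_eq_of_derivative_eval_eq hmn hF hTm hTn hF'

theorem derivative_T_real_eval_ne_zero_or {m n : ℕ} (hm : m ≠ 0) (hmn : m.Coprime n) (x : ℝ) :
    (derivative (T ℝ m)).eval x ≠ 0 ∨ (derivative (T ℝ n)).eval x ≠ 0 := by
  rcases le_or_gt 1 |x| with hx | hx
  · exact .inl (derivative_T_real_eval_ne_zero hm hx)
  obtain ⟨ψ, rfl⟩ := Real.Angle.exists_cos_eq hx.le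
  refine derivative_T_real_angle_cos_ne_zero_or (Nat.isCoprime_iff_coprime.mpr hmn) fun h => ?_
  rcases Real.Angle.sin_eq_zero_iff.mp h with rfl | rfl <;> simp at hx

end Polynomial.Chebyshev

theorem chebyshev_alternating_knot_embedding_general (m n : ℕ) (hm : 3 ≤ m)
    (hgcd : Nat.gcd m n = 1)
    (F : Polynomial ℝ)
    (hF : F * (U ℝ ((m : ℤ) - 1) * U ℝ ((n : ℤ) - 1)) = U ℝ ((m : ℤ) * n - 1)) :
    Function.Injective (fun t : ℝ =>
      ((T ℝ m).eval t, (T ℝ n).eval t, (Polynomial.derivative F).eval t)) ∧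
    (∀ t : ℝ,
      ((Polynomial.derivative (T ℝ m)).eval t, (Polynomial.derivative (T ℝ n)).eval t,
        (Polynomial.derivative (Polynomial.derivative F)).eval t) ≠ (0, 0, 0)) ∧
    (∀ t : ℝ,
      ((Polynomial.derivative (T ℝ m)).eval t, (Polynomial.derivative (T ℝ n)).eval t)
        ≠ (0, 0)) := by
  have hm0 : m ≠ 0 := by omega
  have hT' (t : ℝ) :
      ((derivative (T ℝ m)).eval t, (derivative (T ℝ n)).eval t) ≠ (0, 0) := by
    simpa [imp_iff_not_or] using derivative_T_real_eval_ne_zero_or hm0 hgcd t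
  refine ⟨fun t t' h => ?_, fun t h => hT' t (by simp_all), hT'⟩
  obtain ⟨hTm, hTn, hF'⟩ : _ ∧ _ ∧ _ := by simpa only [Prod.mk.injEq] using h
  have hle : |t| ≤ 1 ↔ |t'| ≤ 1 := by
    rw [abs_eval_T_real_le_one_iff (n := m) (by simpa using hm0), hTm,
      ← abs_eval_T_real_le_one_iff (by simpa using hm0)]
  by_cases ht : |t| ≤ 1
  · exact eq_of_eval_T_real_eq_of_abs_le_one (Nat.isCoprime_iff_coprime.mpr hgcd) hF ht
      (hle.mp ht) hTm hTn hF'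
  · exact eq_of_eval_T_real_eq_of_one_le_abs hm0 hgcd (not_le.mp ht).le
      (not_le.mp (mt hle.mpr ht)).le hTm hTn

theorem chebyshev_alternating_knot_embedding (m n : ℕ) (hm : 3 ≤ m) (hmn : m < n)
    (hgcd : Nat.gcd m n = 1)
    (F : Polynomial ℝ)
    (hF : F * (U ℝ ((m : ℤ) - 1) * U ℝ ((n : ℤ) - 1)) = U ℝ ((m : ℤ) * n - 1)) :
    Function.Injective (fun t : ℝ =>
      ((T ℝ m).eval t, (T ℝ n).eval t, (Polynomial.derivative F).eval t)) ∧
    (∀ t : ℝ,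
      ((Polynomial.derivative (T ℝ m)).eval t, (Polynomial.derivative (T ℝ n)).eval t,
        (Polynomial.derivative (Polynomial.derivative F)).eval t) ≠ (0, 0, 0)) ∧
    (∀ t : ℝ,
      ((Polynomial.derivative (T ℝ m)).eval t, (Polynomial.derivative (T ℝ n)).eval t)
        ≠ (0, 0)) :=
  chebyshev_alternating_knot_embedding_general m n hm hgcd F hF
end
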